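/- arXiv:2502.14056 — 4 statements merged into one kernel-verified Lean document; each statement's English description precedes it below -/
import Mathlib

section
/- For every integer k ≥ 0 and every Young diagram λ with exactly d cells, h_{2k}(λ) ≤ h_{2k}(0, 1, 2, …, d−1); that is, among Young diagrams with d cells, the evaluation of the complete homogeneous symmetric polynomial of degree 2k at the multiset of contents is maximized by the single-row diagram, whose contents are 0, 1, …, d−1. -/
noncomputable section

/-- The content of the cell in row `i` and column `j` (0-indexed) is `j - i`. -/
def content (c : ℕ × ℕ) : ℤ := (c.2 : ℤ) - (c.1 : ℤ)

open scoped Classical in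
/-- The complete homogeneous symmetric polynomial `h_r(x₁, …, x_d)` as a function of
`x : Fin d → ℝ`: the sum of `x_{i₁} ⋯ x_{i_r}` over all `1 ≤ i₁ ≤ … ≤ i_r ≤ d`,
i.e. over all monotone maps `Fin r → Fin d`. -/
def hsym (d r : ℕ) (x : Fin d → ℝ) : ℝ :=
  ∑ f ∈ Finset.univ.filter (fun f : Fin r → Fin d => Monotone f), ∏ i, x (f i)

/-- `h_r(λ)`: the evaluation of the complete homogeneous symmetric polynomial of degree `r`
at the multiset of contents of the Young diagram `λ` (independent of the enumeration of
the cells, `h_r` being symmetric). -/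
def hYoung (r : ℕ) (lam : YoungDiagram) : ℝ :=
  hsym lam.cells.card r (fun i => (content (lam.cells.equivFin.symm i) : ℝ))

/-!
Sort the cells of `λ` by absolute content. A Young diagram with more than `t` cells has at least
`t + 1` cells of absolute content at most `t`: either all its cells lie in the square `[0, t]²`,
or it contains a cell `(a, b)` outside it together with the cells `(min a s, min b s)`,
`s ≤ t`. Hence the `i`-th smallest absolute content is at most `i`, i.e. after a permutation
`|c_i| ≤ i` termwise. Every monomial of `h_r` satisfies `∏ x_{f j} ≤ ∏ |x_{f j}|`, so `h_r` at the
contents is at most `h_r` at `0, 1, …, d − 1`.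
-/

open Finset

namespace Tuple

variable {n : ℕ} {α : Type*} [LinearOrder α]

def sorted (f : Fin n → α) : Fin n → α := f ∘ sort f

theorem monotone_sorted (f : Fin n → α) : Monotone (sorted f) := monotone_sort f

theorem sorted_comp_perm (f : Fin n → α) (σ : Equiv.Perm (Fin n)) :
    sorted (f ∘ σ) = sorted f :=
  comp_perm_comp_sort_eq_comp_sort

theorem sorted_eq_self {f : Fin n → α} (hf : Monotone f) : sorted f = f := by
  rw [sorted, sort_eq_refl_iff_monotone.mpr hf]
  rfl

theorem sorted_comp_sorted {β : Type*} [LinearOrder β] (e : α → β) (f : Fin n → α) :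
    sorted (e ∘ sorted f) = sorted (e ∘ f) :=
  sorted_comp_perm (e ∘ f) (sort f)

theorem sorted_le_of_lt_card_filter {g : Fin n → ℕ} (h : ∀ i : Fin n, (i : ℕ) < #{m | g m ≤ i})
    (i : Fin n) : sorted g i ≤ i := by
  have hcard : #{m | sorted g m ≤ i} = #{m | g m ≤ i} :=
    card_equiv (sort g) fun _ => by simp only [mem_filter, mem_univ, true_and]; rfl
  rw [← lt_card_le_iff_apply_le_of_monotone (monotone_sorted g), hcard]
  exact h i

end Tuple

theorem card_filter_univ_equivFin_symm {α : Type*} (s : Finset α) (p : α → Prop)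
    [DecidablePred p] : #{i | p (s.equivFin.symm i)} = #{a ∈ s | p a} := by
  rw [← card_map ⟨fun i => (s.equivFin.symm i : α),
    Subtype.val_injective.comp s.equivFin.symm.injective⟩]
  congr 1
  ext a
  simp only [mem_map, mem_filter, mem_univ, true_and, Function.Embedding.coeFn_mk]
  constructor
  · rintro ⟨i, hi, rfl⟩
    exact ⟨(s.equivFin.symm i).2, hi⟩
  · rintro ⟨ha, hp⟩
    exact ⟨s.equivFin ⟨a, ha⟩, by simpa using hp, by simp⟩

theorem hsym_comp_perm (d r : ℕ) (x : Fin d → ℝ) (e : Equiv.Perm (Fin d)) :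
    hsym d r (x ∘ e) = hsym d r x := by
  unfold hsym
  refine sum_nbij' (fun f => Tuple.sorted (e ∘ f)) (fun g => Tuple.sorted (e.symm ∘ g))
    (fun _ _ => by simpa using Tuple.monotone_sorted _)
    (fun _ _ => by simpa using Tuple.monotone_sorted _) ?_ ?_ ?_
  · intro f hf
    simp only [mem_filter, mem_univ, true_and] at hf
    simp only [Tuple.sorted_comp_sorted, ← Function.comp_assoc, Equiv.symm_comp_self,
      Function.id_comp, Tuple.sorted_eq_self hf]
  · intro g hg
    simp only [mem_filter, mem_univ, true_and] at hg
    simp only [Tuple.sorted_comp_sorted, ← Function.comp_assoc, Equiv.self_comp_symm,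
      Function.id_comp, Tuple.sorted_eq_self hg]
  · intro f _
    exact (Equiv.prod_comp (Tuple.sort (e ∘ f)) (fun k => x (e (f k)))).symm

theorem hsym_le_of_abs_le {d : ℕ} (r : ℕ) {x y : Fin d → ℝ} (e : Equiv.Perm (Fin d))
    (h : ∀ i, |x i| ≤ y (e i)) : hsym d r x ≤ hsym d r y := by
  rw [← hsym_comp_perm d r y e]
  refine sum_le_sum fun f _ => ?_
  calc ∏ i, x (f i) ≤ |∏ i, x (f i)| := le_abs_self _
    _ = ∏ i, |x (f i)| := abs_prod _ _
    _ ≤ ∏ i, y (e (f i)) := prod_le_prod (fun _ _ => abs_nonneg _) (fun i _ => h (f i))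

theorem YoungDiagram.lt_card_filter_natAbs_content_le (lam : YoungDiagram) {t : ℕ}
    (ht : t < lam.card) : t < #{c ∈ lam.cells | (content c).natAbs ≤ t} := by
  by_cases hsq : ∀ c ∈ lam.cells, c.1 ≤ t ∧ c.2 ≤ t
  · rwa [filter_true_of_mem fun c hc => by have := hsq c hc; simp only [content]; omega]
  push Not at hsq
  obtain ⟨c, hc, hout⟩ := hsq
  have hinj : #(range (t + 1)) ≤ #{c ∈ lam.cells | (content c).natAbs ≤ t} := by
    refine card_le_card_of_injOn (fun s => (min c.1 s, min c.2 s)) ?_ ?_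
    · intro s hs
      rw [mem_coe, mem_range] at hs
      rw [mem_coe, mem_filter, content]
      refine ⟨?_, by dsimp only; omega⟩
      rw [YoungDiagram.mem_cells] at hc ⊢
      exact lam.up_left_mem (min_le_left _ _) (min_le_left _ _) hc
    · intro s hs s' hs' heq
      rw [mem_coe, mem_range] at hs hs'
      simp only [Prod.mk.injEq] at heq
      omega
  rw [card_range] at hinj
  omega

/-- Among Young diagrams with `d` cells, the evaluation of the complete homogeneous
symmetric polynomial of degree `2k` at the multiset of contents is maximized by the
single-row diagram, whose contents are `0, 1, …, d−1`. -/
theorem hYoung_le_single_row (k d : ℕ) (lam : YoungDiagram) (hlam : lam.card = d) :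
    hYoung (2 * k) lam ≤ hsym d (2 * k) (fun i : Fin d => (i : ℝ)) := by
  subst hlam
  set g : Fin lam.card → ℕ := fun i => (content (lam.cells.equivFin.symm i)).natAbs
  have hsorted : ∀ i, g (Tuple.sort g i) ≤ i := Tuple.sorted_le_of_lt_card_filter fun i => by
    rw [card_filter_univ_equivFin_symm lam.cells (fun c => (content c).natAbs ≤ i)]
    exact lam.lt_card_filter_natAbs_content_le i.isLt
  refine hsym_le_of_abs_le (2 * k) (Tuple.sort g).symm fun i => ?_
  have hi := hsorted ((Tuple.sort g).symm i)
  rw [Equiv.apply_symm_apply] at hi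
  rw [← Int.cast_abs, Int.abs_eq_natAbs]
  exact_mod_cast hi
end
end

section
/- For every integer g ≥ 1, the power series Σ_{d=1}^{∞} (F_g^d / d!) · q^d has radius of convergence at least 1; i.e. for every q ∈ ℂ with |q| < 1 the series Σ_{d≥1} (q^d/d!) F_g^d converges absolutely, so F_g is an analytic function on the open unit disc. -/
/-!
Dropping transitivity and the ordering of the `τ_i`, `F_g^d` is at most the number of solutions of
`[π₁, π₂] = (τ₁ ⋯ τ_m)⁻¹` with `m = 2g - 2` transpositions `τ_i`. For fixed `π₁` the solutions `π₂`
of `[π₁, π₂] = c` form a coset of the centralizer of `π₁`, so for each right-hand side there are at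
most as many pairs as commuting pairs, namely `k(S_d) · d! = p(d) · d!`. Hence
`F_g^d / d! ≤ p(d) d^{2m}`. Euler's product gives `p(d) r^d ≤ ∏_k (1 - r^k)⁻¹ ≤ exp (r / (1 - r)²)`
for every `r < 1`, so for `|q| < r < 1` the series is dominated by `C Σ d^{2m} (|q|/r)^d`.
-/
noncomputable section

/-- `F_g^d`: the number of tuples `(π₁, π₂, τ₁, …, τ_{2g−2})` of permutations of `{1,…,d}`
such that (1) `π₁π₂π₁⁻¹π₂⁻¹τ₁⋯τ_{2g−2}` is the identity, (2) each `τ_i` is a transposition,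
(3) `π₁, π₂, τ₁, …, τ_{2g−2}` generate a subgroup acting transitively on `{1,…,d}`, and
(4) writing `τ_i = (s_i t_i)` with `s_i < t_i` one has `t₁ ≤ … ≤ t_{2g−2}`. -/
def Fgd (g d : ℕ) : ℕ :=
  Nat.card {c : Equiv.Perm (Fin d) × Equiv.Perm (Fin d) × (Fin (2 * g - 2) → Equiv.Perm (Fin d)) //
    c.1 * c.2.1 * c.1⁻¹ * c.2.1⁻¹ * (List.ofFn c.2.2).prod = 1 ∧
    (∀ i, (c.2.2 i).IsSwap) ∧
    (∀ x y : Fin d, ∃ σ ∈ Subgroup.closure ({c.1, c.2.1} ∪ Set.range c.2.2), σ x = y) ∧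
    (∀ i j : Fin (2 * g - 2), i ≤ j → ∀ a b a' b' : Fin d, a < b → a' < b' →
      c.2.2 i = Equiv.swap a b → c.2.2 j = Equiv.swap a' b' → b ≤ b')}

open Finset Equiv
open scoped Nat

theorem geom_sum_le_inv_one_sub {x : ℝ} (hx0 : 0 ≤ x) (hx1 : x < 1) (n : ℕ) :
    ∑ i ∈ range n, x ^ i ≤ (1 - x)⁻¹ := by
  have := geom_sum_Ico_le_of_lt_one hx0 hx1 (m := 0) (n := n)
  rwa [← range_eq_Ico, pow_zero, one_div] at this

theorem prod_one_sub_pow_inv_le_exp {r : ℝ} (hr0 : 0 ≤ r) (hr1 : r < 1) (n : ℕ) :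
    ∏ i : Fin n, (1 - r ^ ((i : ℕ) + 1))⁻¹ ≤ Real.exp (r / (1 - r) ^ 2) := by
  have h1r : 0 < 1 - r := sub_pos.2 hr1
  have hfactor : ∀ {x : ℝ}, 0 ≤ x → x ≤ r →
      (1 - x)⁻¹ ≤ Real.exp (x / (1 - r)) := by
    intro x hx0 hxr
    have hx : 0 < 1 - x := by linarith
    calc (1 - x)⁻¹ = x / (1 - x) + 1 := by field_simp; ring
      _ ≤ Real.exp (x / (1 - x)) := Real.add_one_le_exp _
      _ ≤ Real.exp (x / (1 - r)) := by gcongr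
  have hsum : ∑ i : Fin n, r ^ ((i : ℕ) + 1) / (1 - r) ≤ r / (1 - r) ^ 2 := by
    rw [← sum_div, Fin.sum_univ_eq_sum_range (fun i => r ^ (i + 1)), sq, ← div_div]
    refine div_le_div_of_nonneg_right ?_ h1r.le
    simp_rw [pow_succ', ← mul_sum, div_eq_mul_inv]
    exact mul_le_mul_of_nonneg_left (geom_sum_le_inv_one_sub hr0 hr1 n) hr0
  calc ∏ i : Fin n, (1 - r ^ ((i : ℕ) + 1))⁻¹
      ≤ ∏ i : Fin n, Real.exp (r ^ ((i : ℕ) + 1) / (1 - r)) :=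
        prod_le_prod (fun _ _ => inv_nonneg.2 (sub_nonneg.2 (pow_le_one₀ hr0 hr1.le))) fun _ _ =>
          hfactor (by positivity) (pow_le_of_le_one hr0 hr1.le (Nat.succ_ne_zero _))
    _ = Real.exp (∑ i : Fin n, r ^ ((i : ℕ) + 1) / (1 - r)) := (Real.exp_sum _ _).symm
    _ ≤ Real.exp (r / (1 - r) ^ 2) := Real.exp_le_exp.2 hsum

namespace Nat.Partition

theorem sum_count_succ_mul {n : ℕ} (P : n.Partition) :
    ∑ i : Fin n, P.parts.count ((i : ℕ) + 1) * ((i : ℕ) + 1) = n := by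
  classical
  have hsub : P.parts.toFinset ⊆ range (n + 1) := fun a ha =>
    mem_range_succ_iff.2 (le_of_mem_parts (Multiset.mem_toFinset.1 ha))
  calc ∑ i : Fin n, P.parts.count ((i : ℕ) + 1) * ((i : ℕ) + 1)
      = ∑ i ∈ range (n + 1), P.parts.count i * i := by
        rw [sum_range_succ', Fin.sum_univ_eq_sum_range (fun i => P.parts.count (i + 1) * (i + 1))]
        simp
    _ = P.parts.sum := by simp only [sum_multiset_count_of_subset _ _ hsub, smul_eq_mul]
    _ = n := P.parts_sum

theorem count_succ_injective (n : ℕ) :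
    Function.Injective fun (P : n.Partition) (i : Fin n) => P.parts.count ((i : ℕ) + 1) := by
  intro P Q h
  ext a
  rcases Nat.eq_zero_or_pos a with rfl | ha
  · rw [Multiset.count_eq_zero.2 fun h => (P.parts_pos h).ne' rfl,
      Multiset.count_eq_zero.2 fun h => (Q.parts_pos h).ne' rfl]
  by_cases han : a ≤ n
  · obtain ⟨k, rfl⟩ := Nat.exists_eq_add_one_of_ne_zero ha.ne'
    exact congrFun h ⟨k, han⟩
  · rw [Multiset.count_eq_zero.2 fun h => han (le_of_mem_parts h),
      Multiset.count_eq_zero.2 fun h => han (le_of_mem_parts h)]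

theorem card_mul_pow_le_prod {r : ℝ} (hr0 : 0 ≤ r) (hr1 : r < 1) (n : ℕ) :
    Fintype.card n.Partition * r ^ n ≤ ∏ i : Fin n, (1 - r ^ ((i : ℕ) + 1))⁻¹ := by
  classical
  set mult := fun (P : n.Partition) (i : Fin n) => P.parts.count ((i : ℕ) + 1)
  set weight := fun f : Fin n → ℕ => ∏ i : Fin n, (r ^ ((i : ℕ) + 1)) ^ f i
  have hweight : ∀ P, weight (mult P) = r ^ n := fun P => by
    show ∏ i : Fin n, (r ^ ((i : ℕ) + 1)) ^ P.parts.count ((i : ℕ) + 1) = r ^ n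
    simp only [← pow_mul', prod_pow_eq_pow_sum, P.sum_count_succ_mul]
  have hmult : ∀ P, mult P ∈ Fintype.piFinset fun _ => range (n + 1) := fun P => by
    simp only [Fintype.mem_piFinset, mem_range_succ_iff, mult]
    intro i
    calc P.parts.count ((i : ℕ) + 1) ≤ P.parts.count ((i : ℕ) + 1) * ((i : ℕ) + 1) :=
          Nat.le_mul_of_pos_right _ i.succ_pos
      _ ≤ ∑ j : Fin n, P.parts.count ((j : ℕ) + 1) * ((j : ℕ) + 1) :=
          single_le_sum (f := fun j : Fin n => P.parts.count ((j : ℕ) + 1) * ((j : ℕ) + 1))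
            (fun _ _ => Nat.zero_le _) (mem_univ i)
      _ = n := P.sum_count_succ_mul
  calc Fintype.card n.Partition * r ^ n = ∑ P : n.Partition, weight (mult P) := by
        simp [hweight]
    _ = ∑ f ∈ univ.image mult, weight f :=
        (sum_image fun P _ Q _ h => count_succ_injective n h).symm
    _ ≤ ∑ f ∈ Fintype.piFinset fun _ => range (n + 1), weight f :=
        sum_le_sum_of_subset_of_nonneg (by simpa [subset_iff] using hmult)
          fun _ _ _ => by positivity
    _ = ∏ i : Fin n, ∑ j ∈ range (n + 1), (r ^ ((i : ℕ) + 1)) ^ j := sum_prod_piFinset _ _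
    _ ≤ ∏ i : Fin n, (1 - r ^ ((i : ℕ) + 1))⁻¹ := by
        refine prod_le_prod (fun _ _ => sum_nonneg fun _ _ => by positivity) fun _ _ => ?_
        exact geom_sum_le_inv_one_sub (by positivity) (pow_lt_one₀ hr0 hr1 (Nat.succ_ne_zero _)) _

theorem card_mul_pow_le_exp {r : ℝ} (hr0 : 0 ≤ r) (hr1 : r < 1) (n : ℕ) :
    Fintype.card n.Partition * r ^ n ≤ Real.exp (r / (1 - r) ^ 2) :=
  (card_mul_pow_le_prod hr0 hr1 n).trans (prod_one_sub_pow_inv_le_exp hr0 hr1 n)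

end Nat.Partition

section Commutator

variable {G : Type*} [Group G]

theorem commute_inv_mul_of_commutator_eq {a x y : G}
    (h : a * x * a⁻¹ * x⁻¹ = a * y * a⁻¹ * y⁻¹) : Commute a (y⁻¹ * x) := by
  have h' : y⁻¹ * x * a⁻¹ = a⁻¹ * (y⁻¹ * x) := by
    have := congrArg (fun z => y⁻¹ * a⁻¹ * z * x) h
    simpa [mul_assoc] using this
  calc a * (y⁻¹ * x) = a * (y⁻¹ * x * a⁻¹) * a := by group
    _ = y⁻¹ * x * a := by rw [h']; group

/- The solutions `x` of `a x a⁻¹ x⁻¹ = c` form a left coset of the centralizer of `a`, so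
translating by a chosen solution `x₀ a c` lands in the commuting pairs. -/
theorem card_commutator_mul_eq_one_le [Finite G] {ι : Type*} [Finite ι] (f : ι → G)
    (P : ι → Prop) :
    Nat.card {c : G × G × ι // c.1 * c.2.1 * c.1⁻¹ * c.2.1⁻¹ * f c.2.2 = 1 ∧ P c.2.2} ≤
      Nat.card (ConjClasses G) * Nat.card G * Nat.card {t // P t} := by
  let x₀ : G → G → G := fun a c => Classical.epsilon fun x => a * x * a⁻¹ * x⁻¹ = c
  have hx₀ : ∀ {a x c : G}, a * x * a⁻¹ * x⁻¹ = c →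
      a * x₀ a c * a⁻¹ * (x₀ a c)⁻¹ = c :=
    fun {a _ c} h => Classical.epsilon_spec (p := fun x => a * x * a⁻¹ * x⁻¹ = c) ⟨_, h⟩
  let Φ : {c : G × G × ι // c.1 * c.2.1 * c.1⁻¹ * c.2.1⁻¹ * f c.2.2 = 1 ∧ P c.2.2} →
      {p : G × G // Commute p.1 p.2} × {t // P t} := fun c =>
    (⟨(c.1.1, (x₀ c.1.1 (f c.1.2.2)⁻¹)⁻¹ * c.1.2.1), commute_inv_mul_of_commutator_eq
      ((eq_inv_of_mul_eq_one_left c.2.1).trans (hx₀ (eq_inv_of_mul_eq_one_left c.2.1)).symm)⟩,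
      ⟨c.1.2.2, c.2.2⟩)
  have hΦ : Function.Injective Φ := by
    rintro ⟨⟨a, x, t⟩, _⟩ ⟨⟨a', x', t'⟩, _⟩ h
    simp only [Φ, Prod.mk.injEq, Subtype.mk.injEq] at h
    obtain ⟨⟨rfl, hx⟩, rfl⟩ := h
    simp only [mul_right_inj] at hx
    subst hx
    rfl
  calc _ ≤ Nat.card ({p : G × G // Commute p.1 p.2} × {t // P t}) :=
        Nat.card_le_card_of_injective Φ hΦ
    _ = _ := by rw [Nat.card_prod, card_comm_eq_card_conjClasses_mul_card]

end Commutator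

namespace Equiv.Perm

variable (α : Type*) [DecidableEq α]

theorem card_conjClasses_le_card_partition [Fintype α] :
    Nat.card (ConjClasses (Perm α)) ≤ Fintype.card (Fintype.card α).Partition := by
  rw [← Nat.card_eq_fintype_card]
  refine Nat.card_le_card_of_injective (fun c => (Classical.choose c.exists_rep).partition) ?_
  intro c c' h
  rw [← Classical.choose_spec c.exists_rep, ← Classical.choose_spec c'.exists_rep,
    ConjClasses.mk_eq_mk_iff_isConj, partition_eq_of_isConj]
  exact h

theorem card_isSwap_le [Finite α] : Nat.card {σ : Perm α // σ.IsSwap} ≤ Nat.card α ^ 2 := by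
  let f : {p : α × α // p.1 ≠ p.2} → {σ : Perm α // σ.IsSwap} :=
    fun p => ⟨swap p.1.1 p.1.2, p.1.1, p.1.2, p.2, rfl⟩
  have hf : Function.Surjective f := by
    rintro ⟨σ, x, y, hxy, rfl⟩
    exact ⟨⟨(x, y), hxy⟩, rfl⟩
  calc Nat.card {σ : Perm α // σ.IsSwap} ≤ Nat.card {p : α × α // p.1 ≠ p.2} :=
        Nat.card_le_card_of_surjective f hf
    _ ≤ Nat.card (α × α) := Finite.card_subtype_le _
    _ = Nat.card α ^ 2 := by rw [Nat.card_prod, sq]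

theorem card_commutator_mul_prod_swaps_eq_one_le [Fintype α] (m : ℕ) :
    Nat.card {c : Perm α × Perm α × (Fin m → Perm α) //
      c.1 * c.2.1 * c.1⁻¹ * c.2.1⁻¹ * (List.ofFn c.2.2).prod = 1 ∧
        ∀ i, (c.2.2 i).IsSwap} ≤
      Fintype.card (Fintype.card α).Partition * (Fintype.card α)! *
        Fintype.card α ^ (2 * m) :=
  calc _ ≤ Nat.card (ConjClasses (Perm α)) * Nat.card (Perm α) *
          Nat.card {t : Fin m → Perm α // ∀ i, (t i).IsSwap} :=
        card_commutator_mul_eq_one_le (G := Perm α)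
          (fun t : Fin m → Perm α => (List.ofFn t).prod) fun t => ∀ i, (t i).IsSwap
    _ = Nat.card (ConjClasses (Perm α)) * (Fintype.card α)! *
          Nat.card {σ : Perm α // σ.IsSwap} ^ m := by
        rw [Nat.card_congr Equiv.subtypePiEquivPi, Nat.card_pi, prod_const, card_univ,
          Fintype.card_fin, Nat.card_perm, Nat.card_eq_fintype_card (α := α)]
    _ ≤ Fintype.card (Fintype.card α).Partition * (Fintype.card α)! *
          (Fintype.card α ^ 2) ^ m := by
        gcongr
        · exact card_conjClasses_le_card_partition α
        · simpa using card_isSwap_le α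
    _ = _ := by rw [pow_mul]

end Equiv.Perm

theorem Fgd_le (g d : ℕ) :
    Fgd g d ≤ Fintype.card d.Partition * d ! * d ^ (2 * (2 * g - 2)) := by
  have h := Perm.card_commutator_mul_prod_swaps_eq_one_le (Fin d) (2 * g - 2)
  rw [Fintype.card_fin] at h
  -- drop transitivity and the ordering condition on the transpositions
  exact (Nat.card_le_card_of_injective _
    (Subtype.impEmbedding _ _ fun _ hc => ⟨hc.1, hc.2.1⟩).injective).trans h

theorem norm_pow_div_factorial_mul_Fgd_le (g d : ℕ) (q : ℂ) {r : ℝ} (hr0 : 0 < r)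
    (hr1 : r < 1) :
    ‖q ^ d / d ! * Fgd g d‖ ≤
      Real.exp (r / (1 - r) ^ 2) * ((d : ℝ) ^ (2 * (2 * g - 2)) * (‖q‖ / r) ^ d) := by
  set k := 2 * (2 * g - 2)
  have hFgd : (Fgd g d : ℝ) ≤ Fintype.card d.Partition * d ! * (d : ℝ) ^ k := by
    exact_mod_cast Fgd_le g d
  calc ‖q ^ d / d ! * Fgd g d‖ = ‖q‖ ^ d / d ! * Fgd g d := by
        rw [norm_mul, norm_div, norm_pow, Complex.norm_natCast, Complex.norm_natCast]
    _ ≤ ‖q‖ ^ d / d ! * (Fintype.card d.Partition * d ! * (d : ℝ) ^ k) := by gcongr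
    _ = (Fintype.card d.Partition * r ^ d) * ((d : ℝ) ^ k * (‖q‖ / r) ^ d) := by
        rw [div_pow]
        field_simp
    _ ≤ Real.exp (r / (1 - r) ^ 2) * ((d : ℝ) ^ k * (‖q‖ / r) ^ d) := by
        gcongr
        exact Nat.Partition.card_mul_pow_le_exp hr0.le hr1 d

theorem Fg_series_abs_convergent_general (g : ℕ) (q : ℂ) (hq : ‖q‖ < 1) :
    Summable (fun d : ℕ =>
      ‖q ^ (d + 1) / (Nat.factorial (d + 1)) * (Fgd g (d + 1))‖) := by
  set r := (1 + ‖q‖) / 2 with hr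
  have hr0 : 0 < r := by positivity
  have hr1 : r < 1 := by linarith
  have hρ : ‖‖q‖ / r‖ < 1 := by
    rw [Real.norm_of_nonneg (by positivity), div_lt_one hr0]
    linarith
  have hmajorant := (summable_nat_add_iff 1).2
    ((summable_pow_mul_geometric_of_norm_lt_one (2 * (2 * g - 2)) hρ).mul_left
      (Real.exp (r / (1 - r) ^ 2)))
  exact hmajorant.of_nonneg_of_le (fun _ => norm_nonneg _) fun d =>
    norm_pow_div_factorial_mul_Fgd_le g (d + 1) q hr0 hr1

/-- For every `g ≥ 1`, the power series `Σ_{d≥1} (q^d/d!) F_g^d` converges absolutely for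
every `|q| < 1`; so its radius of convergence is at least `1` and it defines an analytic
function on the open unit disc. -/
theorem Fg_series_abs_convergent (g : ℕ) (hg : 1 ≤ g) (q : ℂ) (hq : ‖q‖ < 1) :
    Summable (fun d : ℕ =>
      ‖q ^ (d + 1) / (Nat.factorial (d + 1)) * (Fgd g (d + 1))‖) :=
  Fg_series_abs_convergent_general g q hq
end
end

section
/- For all integers 1 ≤ d ≤ N and every Young diagram λ with exactly d cells, ∏_{(i,j) ∈ λ} (N + j − i) ≥ N(N−1)⋯(N−d+1); that is, on Young diagrams with d ≤ N cells the content polynomial evaluated at N is minimized by the single-column diagram, where it equals the falling factorial. -/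
noncomputable section

lemma corner_exists (lam : YoungDiagram) (h : lam.cells.Nonempty) :
    ∃ c : ℕ × ℕ, c ∈ lam.cells ∧ c.1 + 1 ≤ lam.card ∧
      IsLowerSet (↑(lam.cells.erase c) : Set (ℕ × ℕ)) := by
  obtain ⟨⟨a0, b0⟩, ha0⟩ := h
  have h00 : (0, 0) ∈ lam := lam.isLowerSet (by simp) ha0
  have hk : 0 < lam.colLen 0 := by
    rw [← YoungDiagram.mem_iff_lt_colLen]; exact h00
  obtain ⟨i, hi⟩ : ∃ i, i = lam.colLen 0 - 1 := ⟨_, rfl⟩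
  have hi0 : (i, 0) ∈ lam := by
    rw [YoungDiagram.mem_iff_lt_colLen]; omega
  have hrl : 0 < lam.rowLen i := by
    rw [← YoungDiagram.mem_iff_lt_rowLen]; exact hi0
  obtain ⟨j, hj⟩ : ∃ j, j = lam.rowLen i - 1 := ⟨_, rfl⟩
  have hc : (i, j) ∈ lam := by
    rw [YoungDiagram.mem_iff_lt_rowLen]; omega
  -- maximality of (i,j)
  have hmax : ∀ a b : ℕ, (a, b) ∈ lam → i ≤ a → j ≤ b → a = i ∧ b = j := by
    intro a b hab hia hjb
    have h1 : a < lam.colLen b := YoungDiagram.mem_iff_lt_colLen.mp hab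
    have h2 : lam.colLen b ≤ lam.colLen 0 := lam.colLen_anti 0 b (Nat.zero_le _)
    have ha : a = i := by omega
    have h3 : b < lam.rowLen a := YoungDiagram.mem_iff_lt_rowLen.mp hab
    rw [ha] at h3
    omega
  refine ⟨(i, j), hc, ?_, ?_⟩
  · -- i + 1 ≤ card, since column 0 has colLen 0 ≥ i + 1 cells
    have hsub : lam.col 0 ⊆ lam.cells := by
      intro x hx
      exact (YoungDiagram.mem_col_iff.mp hx).1
    have hle := Finset.card_le_card hsub
    rw [← lam.colLen_eq_card] at hle
    have : lam.card = lam.cells.card := rfl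
    simp only [YoungDiagram.card]
    omega
  · intro ⟨a', b'⟩ ⟨a, b⟩ hle hmem
    simp only [Finset.coe_erase, Set.mem_diff, Finset.mem_coe, Set.mem_singleton_iff] at hmem ⊢
    obtain ⟨hmem, hne⟩ := hmem
    refine ⟨lam.isLowerSet hle hmem, ?_⟩
    intro heq
    rw [Prod.mk.injEq] at heq
    obtain ⟨rfl, rfl⟩ := heq
    obtain ⟨h1, h2⟩ := Prod.mk_le_mk.mp hle
    obtain ⟨rfl, rfl⟩ := hmax a' b' hmem h1 h2
    exact hne rfl

lemma aux_lemma (N : ℕ) : ∀ d : ℕ, d ≤ N → ∀ lam : YoungDiagram, lam.card = d →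
    (∏ i ∈ Finset.range d, ((N : ℤ) - (i : ℤ))) ≤ ∏ c ∈ lam.cells, ((N : ℤ) + content c) := by
  intro d
  induction d with
  | zero =>
    intro _ lam hlam
    rw [Finset.card_eq_zero.mp hlam]
    simp
  | succ d ih =>
    intro hdN lam hlam
    have hlam' : lam.cells.card = d + 1 := hlam
    have hne : lam.cells.Nonempty := Finset.card_pos.mp (by omega)
    obtain ⟨c, hc, hcard, hls⟩ := corner_exists lam hne
    set μ : YoungDiagram := ⟨lam.cells.erase c, hls⟩ with hμ
    have hμcard : μ.card = d := by
      have h1 : μ.cells = lam.cells.erase c := rfl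
      have h2 : μ.card = μ.cells.card := rfl
      rw [h2, h1, Finset.card_erase_of_mem hc]
      have : lam.card = lam.cells.card := rfl
      omega
    have hIH := ih (by omega) μ hμcard
    have hprod : ∏ x ∈ lam.cells, ((N : ℤ) + content x)
        = ((N : ℤ) + content c) * ∏ x ∈ μ.cells, ((N : ℤ) + content x) := by
      exact (Finset.mul_prod_erase lam.cells _ hc).symm
    have hfall : (∏ i ∈ Finset.range (d + 1), ((N : ℤ) - (i : ℤ)))
        = ((N : ℤ) - (d : ℤ)) * ∏ i ∈ Finset.range d, ((N : ℤ) - (i : ℤ)) := by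
      rw [Finset.prod_range_succ]; ring
    have hfallpos : (0 : ℤ) ≤ ∏ i ∈ Finset.range d, ((N : ℤ) - (i : ℤ)) := by
      apply Finset.prod_nonneg
      intro i hi
      have h1 := Finset.mem_range.mp hi
      have h2 : (i : ℤ) < N := by exact_mod_cast lt_of_lt_of_le h1 (by omega)
      omega
    have hfac : ((N : ℤ) - (d : ℤ)) ≤ (N : ℤ) + content c := by
      have h1 : c.1 ≤ d := by omega
      have h2 : (c.1 : ℤ) ≤ (d : ℤ) := by exact_mod_cast h1
      have h3 : (0 : ℤ) ≤ (c.2 : ℤ) := Int.ofNat_nonneg _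
      unfold content
      omega
    rw [hprod, hfall]
    apply mul_le_mul hfac hIH hfallpos
    have h4 : (d : ℤ) < N := by exact_mod_cast hdN
    linarith

/-- For `1 ≤ d ≤ N` and any Young diagram `λ` with exactly `d` cells, the content
polynomial evaluated at `N` is at least the falling factorial `N(N−1)⋯(N−d+1)` (the
value attained by the single-column diagram). -/
theorem falling_factorial_le_content_polynomial (d N : ℕ) (hd : 1 ≤ d) (hdN : d ≤ N)
    (lam : YoungDiagram) (hlam : lam.card = d) :
    (∏ i ∈ Finset.range d, ((N : ℤ) - (i : ℤ))) ≤ ∏ c ∈ lam.cells, ((N : ℤ) + content c) := by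
  exact aux_lemma N d hdN lam hlam
end
end

section
/- For all integers N ≥ 1, d ≥ 1 and every Young diagram λ with exactly d cells and at most N rows, ∏_{(i,j) ∈ λ} (N + j − i) > N^d · e^{−d}. -/
/-!
Column `j` of `λ`, of length `c ≤ N`, contributes
`∏_{i<c} (N + j - i) ≥ N (N - 1) ⋯ (N - c + 1)`, and this falling factorial exceeds `N^c e^(-c)`:
telescoping `(1 + 1/m)^m < e`, that is `g (m + 1) < e · g m` for `g m = m^m / m!`, gives
`g N < e^c · g (N - c)`, and `(N - c)^(N - c) ≤ N^(N - c)`. Multiplying over the columns gives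
the bound, since the column lengths add up to `d`.
-/

noncomputable section

open Finset Nat Real

lemma add_one_pow_lt_exp_one_mul_pow (m : ℕ) : ((m : ℝ) + 1) ^ m < exp 1 * (m : ℝ) ^ m := by
  rcases m.eq_zero_or_pos with rfl | hm
  · simp
  have hm' : (0 : ℝ) < m := by exact_mod_cast hm
  calc ((m : ℝ) + 1) ^ m = ((m : ℝ)⁻¹ + 1) ^ m * (m : ℝ) ^ m := by
        rw [← mul_pow, add_mul, inv_mul_cancel₀ hm'.ne', one_mul, add_comm]
    _ < exp (m : ℝ)⁻¹ ^ m * (m : ℝ) ^ m := by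
        gcongr
        exact add_one_lt_exp (inv_ne_zero hm'.ne')
    _ = exp 1 * (m : ℝ) ^ m := by
        rw [← exp_nat_mul, mul_inv_cancel₀ hm'.ne']

lemma add_pow_mul_factorial_lt (n : ℕ) {c : ℕ} (hc : 1 ≤ c) :
    ((n : ℝ) + c) ^ (n + c) * n ! < exp c * (n : ℝ) ^ n * (n + c)! := by
  induction c, hc using Nat.le_induction with
  | base =>
    calc ((n : ℝ) + (1 : ℕ)) ^ (n + 1) * n ! = ((n : ℝ) + 1) ^ n * ((n + 1) * n !) := by
          push_cast; ring
      _ < exp 1 * (n : ℝ) ^ n * ((n + 1) * n !) := by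
          gcongr; exact add_one_pow_lt_exp_one_mul_pow n
      _ = exp (1 : ℕ) * (n : ℝ) ^ n * (n + 1)! := by push_cast [factorial_succ]; ring
  | succ c hc ih =>
    have h := add_one_pow_lt_exp_one_mul_pow (n + c)
    calc ((n : ℝ) + ↑(c + 1)) ^ (n + (c + 1)) * n !
        = ((n + c : ℕ) + 1 : ℝ) ^ (n + c) * (n + c + 1) * n ! := by push_cast; ring
      _ < exp 1 * ((n + c : ℕ) : ℝ) ^ (n + c) * (n + c + 1) * n ! := by gcongr
      _ = exp 1 * (n + c + 1) * (((n : ℝ) + c) ^ (n + c) * n !) := by push_cast; ring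
      _ < exp 1 * (n + c + 1) * (exp c * (n : ℝ) ^ n * (n + c)!) := by gcongr
      _ = exp ↑(c + 1) * (n : ℝ) ^ n * (n + (c + 1))! := by
        rw [← add_assoc, factorial_succ, cast_succ, exp_add, cast_mul]; push_cast; ring

lemma pow_mul_exp_neg_lt_descFactorial {N c : ℕ} (hc : 1 ≤ c) (hcN : c ≤ N) :
    (N : ℝ) ^ c * exp (-c) < N.descFactorial c := by
  obtain ⟨n, rfl⟩ := Nat.exists_eq_add_of_le' hcN
  have key := add_pow_mul_factorial_lt n hc
  have hfac : ((n + c)! : ℝ) = n ! * (n + c).descFactorial c := by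
    rw [← factorial_mul_descFactorial hcN, Nat.add_sub_cancel]; push_cast; ring
  have hlt : ((n : ℝ) + c) ^ n * n ! * ((n : ℝ) + c) ^ c
      < ((n : ℝ) + c) ^ n * n ! * (exp c * (n + c).descFactorial c) :=
    calc ((n : ℝ) + c) ^ n * n ! * ((n : ℝ) + c) ^ c = ((n : ℝ) + c) ^ (n + c) * n ! := by
          ring
      _ < exp c * (n : ℝ) ^ n * (n + c)! := key
      _ ≤ exp c * ((n : ℝ) + c) ^ n * (n + c)! := by
          gcongr; exact le_add_of_nonneg_right c.cast_nonneg
      _ = _ := by rw [hfac]; ring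
  rw [exp_neg, ← div_eq_mul_inv, div_lt_iff₀ (exp_pos _), mul_comm _ (exp _)]
  push_cast
  exact lt_of_mul_lt_mul_left hlt (by positivity)

namespace YoungDiagram

variable (μ : YoungDiagram)

lemma prod_cells_eq_prod_prod_col {M : Type*} [CommMonoid M] (f : ℕ × ℕ → M) :
    ∏ c ∈ μ.cells, f c = ∏ j ∈ μ.cells.image Prod.snd, ∏ c ∈ μ.col j, f c :=
  (prod_fiberwise_of_maps_to (fun _ hc => mem_image_of_mem _ hc) f).symm

lemma card_eq_sum_colLen : μ.card = ∑ j ∈ μ.cells.image Prod.snd, μ.colLen j := by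
  simp only [colLen_eq_card]
  exact card_eq_sum_card_fiberwise fun _ hc => mem_image_of_mem _ hc

lemma colLen_pos_of_mem_image_snd {j : ℕ} (hj : j ∈ μ.cells.image Prod.snd) :
    0 < μ.colLen j := by
  obtain ⟨⟨i, j⟩, hc, rfl⟩ := mem_image.mp hj
  exact (mem_iff_lt_colLen.mp hc).trans_le' (Nat.zero_le i)

lemma descFactorial_colLen_le_prod_col {N j : ℕ} (hN : μ.colLen j ≤ N) :
    (N.descFactorial (μ.colLen j) : ℝ) ≤ ∏ c ∈ μ.col j, ((N : ℝ) + content c) := by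
  rw [descFactorial_eq_prod_range, col_eq_prod, prod_product, cast_prod]
  refine prod_le_prod (fun i _ => by positivity) fun i hi => ?_
  have hiN : i ≤ N := (mem_range.mp hi).le.trans hN
  have : (0 : ℝ) ≤ j := j.cast_nonneg
  simp only [content, prod_singleton, cast_sub hiN]
  push_cast
  linarith

lemma pow_mul_exp_neg_lt_prod_col {N j : ℕ} (hj : 0 < μ.colLen j) (hN : μ.colLen j ≤ N) :
    (N : ℝ) ^ μ.colLen j * exp (-(μ.colLen j : ℝ)) <
      ∏ c ∈ μ.col j, ((N : ℝ) + content c) :=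
  (pow_mul_exp_neg_lt_descFactorial hj hN).trans_le (μ.descFactorial_colLen_le_prod_col hN)

end YoungDiagram

/-- For `N ≥ 1`, `d ≥ 1` and any Young diagram `λ` with exactly `d` cells and at most `N`
rows, `∏_{(i,j) ∈ λ} (N + j − i) > N^d e^(−d)`. -/
theorem content_polynomial_gt (N d : ℕ) (hN : 1 ≤ N) (hd : 1 ≤ d)
    (lam : YoungDiagram) (hlam : lam.card = d) (hrows : lam.colLen 0 ≤ N) :
    (N : ℝ) ^ d * Real.exp (-(d : ℝ)) < ∏ c ∈ lam.cells, ((N : ℝ) + (content c : ℝ)) := by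
  set J := lam.cells.image Prod.snd
  have hJ : J.Nonempty := image_nonempty.mpr (Finset.card_pos.mp (hlam.symm ▸ hd : 0 < lam.card))
  have hN' : (0 : ℝ) < N := by exact_mod_cast hN
  rw [lam.prod_cells_eq_prod_prod_col, ← hlam, lam.card_eq_sum_colLen]
  calc (N : ℝ) ^ (∑ j ∈ J, lam.colLen j) * exp (-((∑ j ∈ J, lam.colLen j : ℕ) : ℝ))
      = ∏ j ∈ J, (N : ℝ) ^ lam.colLen j * exp (-(lam.colLen j : ℝ)) := by
        rw [prod_mul_distrib, prod_pow_eq_pow_sum, ← exp_sum, cast_sum, sum_neg_distrib]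
    _ < _ := prod_lt_prod_of_nonempty (fun _ _ => by positivity)
        (fun j hj => lam.pow_mul_exp_neg_lt_prod_col (lam.colLen_pos_of_mem_image_snd hj)
          ((lam.colLen_anti 0 j j.zero_le).trans hrows)) hJ
end
end
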